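/- arXiv:0809.0937 — 5 statements merged into one kernel-verified Lean document; each statement's English description precedes it below -/
import Mathlib

section
/- Let L be a free Z-module with a bilinear form and \rho an isometry of L of order 3 with no nonzero fixed points. Then J(x) = (\rho(x) - \rho^2(x))/\sqrt{3}, defined on L \otimes R, satisfies J^2 = -id and J is an isometry. -/
/-- Let `L ⊗ ℝ` be the real vector space underlying a ℤ-lattice with symmetric
bilinear form `B` and a fixed-point-free isometry `ρ` of order 3 (equivalently
`ρ² + ρ + 1 = 0`).  Then `J x = (ρ x - ρ² x)/√3` satisfies `J² = -id` and `J`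
is an isometry. -/
theorem stmt4 {V : Type*} [AddCommGroup V] [Module ℝ V]
    (B : V →ₗ[ℝ] V →ₗ[ℝ] ℝ) (hsymm : ∀ x y, B x y = B y x)
    (ρ : V →ₗ[ℝ] V) (hiso : ∀ x y, B (ρ x) (ρ y) = B x y)
    (hord : ρ ∘ₗ ρ ∘ₗ ρ = LinearMap.id)
    (hfpf : ρ ∘ₗ ρ + ρ + LinearMap.id = 0)
    (J : V → V) (hJ : ∀ x, J x = (Real.sqrt 3)⁻¹ • (ρ x - ρ (ρ x))) :
    (∀ x, J (J x) = -x) ∧ (∀ x y, B (J x) (J y) = B x y) := by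
  have h3 : Real.sqrt 3 * Real.sqrt 3 = 3 := Real.mul_self_sqrt (by norm_num)
  have hs : Real.sqrt 3 ≠ 0 := by positivity
  have hss : (Real.sqrt 3)⁻¹ * (Real.sqrt 3)⁻¹ = 3⁻¹ := by
    rw [← mul_inv, h3]
  have hρ3 : ∀ x, ρ (ρ (ρ x)) = x := by
    intro x
    have h := LinearMap.congr_fun hord x
    simpa using h
  have hfp : ∀ x, ρ (ρ x) = -ρ x - x := by
    intro x
    have h := LinearMap.congr_fun hfpf x
    simp only [LinearMap.add_apply, LinearMap.comp_apply, LinearMap.id_apply,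
      LinearMap.zero_apply] at h
    have := eq_neg_of_add_eq_zero_left (by rw [← h]; abel :
      ρ (ρ x) + (ρ x + x) = 0)
    rw [this]; abel
  constructor
  · intro x
    rw [hJ, hJ, map_smul, map_smul, map_sub, map_sub, hρ3, hfp x]
    rw [← smul_sub, smul_smul, hss]
    have h1 : (-ρ x - x - x - (x - ρ x) : V) = (-3 : ℝ) • x := by
      rw [show ((-3 : ℝ) • x : V) = -(x + x + x) by
        rw [show ((-3 : ℝ) : ℝ) = -(1 + 1 + 1) by norm_num]
        simp [add_smul, one_smul]]
      abel
    rw [h1, smul_smul]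
    norm_num
  · intro x y
    have key : ∀ x y, B x (ρ y) + B (ρ x) y = - B x y := by
      intro x y
      have h1 : B (ρ x) y = B (ρ (ρ x)) (ρ y) := (hiso (ρ x) y).symm
      rw [hfp x] at h1
      simp only [map_sub, map_neg, LinearMap.sub_apply, LinearMap.neg_apply] at h1
      rw [hiso] at h1
      linarith
    rw [hJ, hJ]
    simp only [map_smul, map_sub, LinearMap.smul_apply, LinearMap.sub_apply,
      smul_eq_mul]
    have e1 : B (ρ x) (ρ y) = B x y := hiso x y
    have e2 : B (ρ x) (ρ (ρ y)) = B x (ρ y) := hiso x (ρ y)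
    have e3 : B (ρ (ρ x)) (ρ y) = B (ρ x) y := hiso (ρ x) y
    have e4 : B (ρ (ρ x)) (ρ (ρ y)) = B x y := by rw [hiso (ρ x) (ρ y), hiso]
    rw [e1, e2, e3, e4]
    have hk := key x y
    have expand : (Real.sqrt 3)⁻¹ * ((Real.sqrt 3)⁻¹ * (B x y - B (ρ x) y) -
        (Real.sqrt 3)⁻¹ * (B x (ρ y) - B x y)) =
        (Real.sqrt 3)⁻¹ * (Real.sqrt 3)⁻¹ * (2 * B x y - B (ρ x) y - B x (ρ y)) := by
      ring
    rw [expand, hss]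
    linarith
end

section
/- Let L be a Z-lattice with a fixed-point-free order-3 isometry \rho, and define the hermitian form h(x,y) = (1/2)(3\langle x,y\rangle + \theta \langle x, \rho(y) - \rho^2(y)\rangle) where \theta = \omega - \omega^2 with \omega = e^{2\pi i/3}. Then h is a hermitian form on L viewed as a module over the Eisenstein integers E = Z[\omega] (with \omega acting as \rho), i.e. h(x,y) = conj(h(y,x)) and h(\lambda x, y) = \lambda h(x,y) for \lambda \in E. -/
/-- The primitive cube root of unity `ω = e^{2πi/3} = (-1 + i√3)/2`. -/
noncomputable def omega3 : ℂ := (-1 + Real.sqrt 3 * Complex.I) / 2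

/-- Let `L` be a ℤ-lattice with symmetric bilinear form `B` and fixed-point-free
order-3 isometry `ρ` (`ρ² + ρ + 1 = 0`).  Then
`h(x,y) = (1/2)(3⟨x,y⟩ + θ⟨x, ρ(y) - ρ²(y)⟩)` with `θ = ω - ω²` is a hermitian
form on `L` viewed as a module over the Eisenstein integers `ℤ[ω]` (with `ω`
acting as `ρ`): it is conjugate-symmetric and `E`-linear in the first variable. -/
theorem stmt5 {L : Type*} [AddCommGroup L]
    (B : L →ₗ[ℤ] L →ₗ[ℤ] ℤ) (hsymm : ∀ x y, B x y = B y x)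
    (ρ : L →ₗ[ℤ] L) (hiso : ∀ x y, B (ρ x) (ρ y) = B x y)
    (hfpf : ρ ∘ₗ ρ + ρ + LinearMap.id = 0)
    (h : L → L → ℂ)
    (hdef : ∀ x y, h x y = (1 / 2) * (3 * (B x y : ℂ) +
      (omega3 - omega3 ^ 2) * (B x (ρ y - ρ (ρ y)) : ℂ))) :
    (∀ x y, h x y = starRingEnd ℂ (h y x)) ∧
    (∀ (a b : ℤ) (x y : L),
      h (a • x + b • ρ x) y = ((a : ℂ) + (b : ℂ) * omega3) * h x y) := by
  have hs : ((Real.sqrt 3 : ℝ) : ℂ) ^ 2 = 3 := by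
    norm_cast
    rw [Real.sq_sqrt] ; norm_num
  have hω : omega3 ^ 2 + omega3 + 1 = 0 := by
    unfold omega3
    linear_combination (Complex.I ^ 2 / 4) * hs + (3 / 4) * Complex.I_sq
  have hθ : starRingEnd ℂ (omega3 - omega3 ^ 2) = -(omega3 - omega3 ^ 2) := by
    have hv : omega3 - omega3 ^ 2 = (Real.sqrt 3 : ℂ) * Complex.I := by
      unfold omega3
      linear_combination (-(Complex.I ^ 2) / 4) * hs - (3 / 4) * Complex.I_sq
    rw [hv, map_mul, Complex.conj_ofReal, Complex.conj_I]
    ring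
  have hρ2 : ∀ x : L, ρ (ρ x) = -ρ x - x := by
    intro x
    have h0 := LinearMap.congr_fun hfpf x
    simp only [LinearMap.add_apply, LinearMap.comp_apply, LinearMap.id_apply,
      LinearMap.zero_apply] at h0
    rw [add_assoc] at h0
    rw [eq_neg_of_add_eq_zero_left h0]
    abel
  have key1 : ∀ x y : L, B (ρ x) y = -(B x y) - B x (ρ y) := by
    intro x y
    have h1 := hiso (ρ x) y
    rw [hρ2 x] at h1
    simp only [map_sub, map_neg, LinearMap.sub_apply, LinearMap.neg_apply, hiso] at h1
    omega
  have keyv : ∀ x y : L, B x (ρ y - ρ (ρ y)) = 2 * B x (ρ y) + B x y := by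
    intro x y
    rw [hρ2 y]
    simp only [map_sub, map_neg]
    ring
  constructor
  · intro x y
    have e1 : B y (ρ x) = -(B x y) - B x (ρ y) := by
      rw [hsymm y (ρ x)]; exact key1 x y
    rw [hdef x y, hdef y x, keyv, keyv, hsymm y x, e1]
    simp only [map_mul, map_add, map_div₀, map_one, map_ofNat, map_intCast, hθ]
    push_cast
    ring
  · intro a b x y
    rw [hdef, hdef, keyv, keyv]
    simp only [map_add, map_smul, LinearMap.add_apply, LinearMap.smul_apply,
      smul_eq_mul, hiso, key1]
    push_cast
    linear_combination ((b : ℂ) / 2 *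
      ((-3) * ((B x y : ℂ) + (B x (ρ y) : ℂ)) +
        ((B x y : ℂ) + 2 * (B x (ρ y) : ℂ)) * omega3)) * hω
end

section
/- If L is an integral Z-lattice (i.e., its bilinear form is Z-valued) with fixed-point-free order-3 isometry \rho, then the associated hermitian form h(x,y) = (1/2)(3\langle x,y\rangle + \theta\langle x, \rho(y)-\rho^2(y)\rangle) takes values in \theta E for all x, y in L, where E = Z[\omega] and \theta = \omega - \omega^2. -/
lemma theta_eq : omega3 - omega3 ^ 2 = Real.sqrt 3 * Complex.I := by
  have hs : (Real.sqrt 3 : ℂ) ^ 2 = 3 := by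
    rw [← Complex.ofReal_pow, Real.sq_sqrt (by norm_num : (3:ℝ) ≥ 0)]
    norm_num
  have hI := Complex.I_sq
  unfold omega3
  linear_combination (-(1:ℂ)/4 * Complex.I^2) * hs + (-(3:ℂ)/4) * hI

/-- If `L` is an integral ℤ-lattice (ℤ-valued symmetric bilinear form `B`) with
fixed-point-free order-3 isometry `ρ`, then the associated hermitian form
`h(x,y) = (1/2)(3⟨x,y⟩ + θ⟨x, ρ(y) - ρ²(y)⟩)` takes values in `θ·ℤ[ω]`,
where `θ = ω - ω²`. -/
theorem stmt7 {L : Type*} [AddCommGroup L]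
    (B : L →ₗ[ℤ] L →ₗ[ℤ] ℤ) (hsymm : ∀ x y, B x y = B y x)
    (ρ : L →ₗ[ℤ] L) (hiso : ∀ x y, B (ρ x) (ρ y) = B x y)
    (hfpf : ρ ∘ₗ ρ + ρ + LinearMap.id = 0)
    (h : L → L → ℂ)
    (hdef : ∀ x y, h x y = (1 / 2) * (3 * (B x y : ℂ) +
      (omega3 - omega3 ^ 2) * (B x (ρ y - ρ (ρ y)) : ℂ))) :
    ∀ x y, ∃ a b : ℤ, h x y = (omega3 - omega3 ^ 2) * ((a : ℂ) + (b : ℂ) * omega3) := by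
  intro x y
  refine ⟨B x (ρ y), -(B x y), ?_⟩
  have hρ2 : ρ (ρ y) = -(ρ y + y) := by
    have h0 := DFunLike.congr_fun hfpf y
    simp only [LinearMap.add_apply, LinearMap.comp_apply, LinearMap.id_apply,
      LinearMap.zero_apply] at h0
    rw [add_assoc] at h0
    exact eq_neg_of_add_eq_zero_left h0
  have key : B x (ρ y - ρ (ρ y)) = 2 * B x (ρ y) + B x y := by
    rw [hρ2]
    simp only [map_sub, map_neg, map_add]
    ring
  rw [hdef, key, theta_eq]
  have hs : (Real.sqrt 3 : ℂ) ^ 2 = 3 := by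
    rw [← Complex.ofReal_pow, Real.sq_sqrt (by norm_num : (3:ℝ) ≥ 0)]
    norm_num
  have h2 : (Real.sqrt 3 * Complex.I) ^ 2 = -3 := by
    rw [mul_pow, hs, Complex.I_sq]; ring
  push_cast
  unfold omega3
  linear_combination ((B x y : ℂ) / 2) * h2
end

section
/- In an Eisenstein lattice L satisfying h(x,y) \in \theta E for all x,y, for any root z (element with h(z,z) = -3), the map s_z(x) = x - (1-\omega)(h(x,z)/h(z,z)) z is an isometry of L of order 3 fixing the hyperplane z^\perp pointwise and sending z to \omega z. -/
/-- The Eisenstein integers `ℤ[ω]`, as a subring of `ℂ`. -/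
noncomputable def Eis : Subring ℂ := Subring.closure {omega3}

lemma sqrt3_sq : ((Real.sqrt 3 : ℝ) : ℂ) ^ 2 = 3 := by
  norm_cast
  rw [sq]
  exact Real.mul_self_sqrt (by norm_num)

lemma omega3_quad : omega3 ^ 2 + omega3 + 1 = 0 := by
  unfold omega3
  linear_combination (Complex.I^2/4) * sqrt3_sq + (3/4 : ℂ) * Complex.I_sq

lemma omega3_conj : starRingEnd ℂ omega3 = omega3 ^ 2 := by
  have h1 : starRingEnd ℂ omega3 = (-1 - Real.sqrt 3 * Complex.I) / 2 := by
    simp only [omega3, map_div₀, map_add, map_neg, map_one, map_mul, Complex.conj_ofReal,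
      Complex.conj_I, map_ofNat]
    ring
  rw [h1]
  unfold omega3
  linear_combination (-(Complex.I^2)/4) * sqrt3_sq + (-3/4 : ℂ) * Complex.I_sq

lemma omega3_mem : omega3 ∈ Eis := Subring.subset_closure rfl

/-- In an Eisenstein lattice `L` (a module over `E = ℤ[ω]` with hermitian form
`h`) satisfying `h(x,y) ∈ θE` for all `x, y` (`θ = ω - ω²`), for any root `z`
(i.e. `h(z,z) = -3`) the map `s_z(x) = x - (1-ω)(h(x,z)/h(z,z))·z` is an
isometry of `L` of order 3 that fixes the hyperplane `z^⊥` pointwise and sends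
`z` to `ω·z`. -/
theorem stmt8 {L : Type*} [AddCommGroup L] [Module Eis L]
    (h : L → L → ℂ)
    (haddl : ∀ x₁ x₂ y, h (x₁ + x₂) y = h x₁ y + h x₂ y)
    (hsmul : ∀ (c : Eis) (x y : L), h (c • x) y = (c : ℂ) * h x y)
    (hconj : ∀ x y, h x y = starRingEnd ℂ (h y x))
    (hval : ∀ x y, ∃ e : Eis, h x y = (omega3 - omega3 ^ 2) * (e : ℂ))
    (z : L) (hz : h z z = -3)
    (s : L → L)
    (hs : ∀ x, ∃ c : Eis, (c : ℂ) = (1 - omega3) * h x z / h z z ∧ s x = x - c • z) :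
    (∀ x y, h (s x) (s y) = h x y) ∧
    (∀ x, s (s (s x)) = x) ∧
    (∀ x, h x z = 0 → s x = x) ∧
    (∃ cw : Eis, (cw : ℂ) = omega3 ∧ s z = cw • z) := by
  have hq := omega3_quad
  -- subtraction in the first argument
  have hsubl : ∀ x y w : L, h (x - y) w = h x w - h y w := by
    intro x y w
    have h1 := haddl (x - y) y w
    rw [sub_add_cancel] at h1
    exact eq_sub_of_add_eq h1.symm
  -- second-argument rules
  have hsubr : ∀ x y w : L, h x (y - w) = h x y - h x w := by
    intro x y w
    rw [hconj x (y - w), hsubl, map_sub, ← hconj, ← hconj]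
  have hsmulr : ∀ (c : Eis) (x y : L), h x (c • y) = starRingEnd ℂ (c : ℂ) * h x y := by
    intro c x y
    rw [hconj x (c • y), hsmul, map_mul, ← hconj]
  -- value of h (s x) z
  have hsz : ∀ (x : L) (c : Eis), s x = x - c • z → h (s x) z = h x z - (c : ℂ) * h z z := by
    intro x c hc
    rw [hc, hsubl, hsmul]
  -- part 1: isometry
  have part1 : ∀ x y, h (s x) (s y) = h x y := by
    intro x y
    obtain ⟨cx, hcx, hsx⟩ := hs x
    obtain ⟨cy, hcy, hsy⟩ := hs y
    have hconjcy : starRingEnd ℂ (cy : ℂ) =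
        (1 - omega3 ^ 2) * starRingEnd ℂ (h y z) / (-3) := by
      rw [hcy, hz]
      simp only [map_div₀, map_mul, map_sub, map_one, omega3_conj, map_neg, map_ofNat]
    have hzy : h z y = starRingEnd ℂ (h y z) := hconj z y
    rw [hsx, hsy]
    simp only [hsubl, hsubr, hsmul, hsmulr]
    rw [hconjcy, hcx, hz, hzy]
    set A := h x z
    set B := starRingEnd ℂ (h y z)
    linear_combination (A * B * (1 - omega3) / 3) * hq
  -- coefficient of s x, complex value
  have hcoeff : ∀ (x : L) (c : Eis), (c : ℂ) = (1 - omega3) * h x z / h z z →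
      ∀ (c' : Eis), (c' : ℂ) = (1 - omega3) * h (s x) z / h z z → s x = x - c • z →
      (c' : ℂ) = omega3 * (c : ℂ) := by
    intro x c hc c' hc' hsx
    rw [hsz x c hsx, hz] at hc'
    rw [hc, hz] at *
    rw [hc']
    field_simp
    ring
  -- part 2: order 3
  have part2 : ∀ x, s (s (s x)) = x := by
    intro x
    obtain ⟨c1, hc1, hsx1⟩ := hs x
    obtain ⟨c2, hc2, hsx2⟩ := hs (s x)
    obtain ⟨c3, hc3, hsx3⟩ := hs (s (s x))
    have e2 : (c2 : ℂ) = omega3 * (c1 : ℂ) := hcoeff x c1 hc1 c2 hc2 hsx1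
    have e3 : (c3 : ℂ) = omega3 * (c2 : ℂ) := hcoeff (s x) c2 hc2 c3 hc3 hsx2
    have hsum : ((c1 + c2 + c3 : Eis) : ℂ) = 0 := by
      push_cast
      rw [e3, e2]
      linear_combination (c1 : ℂ) * hq
    have hsum' : (c1 + c2 + c3 : Eis) = 0 := Subtype.ext hsum
    rw [hsx3, hsx2, hsx1]
    have : x - c1 • z - c2 • z - c3 • z = x - (c1 + c2 + c3) • z := by
      rw [add_smul, add_smul]
      abel
    rw [this, hsum', zero_smul, sub_zero]
  -- part 3: fixes the hyperplane
  have part3 : ∀ x, h x z = 0 → s x = x := by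
    intro x hx
    obtain ⟨c, hc, hsx⟩ := hs x
    have : (c : ℂ) = 0 := by rw [hc, hx]; ring
    have hc0 : c = 0 := Subtype.ext this
    rw [hsx, hc0, zero_smul, sub_zero]
  refine ⟨part1, part2, part3, ?_⟩
  -- part 4: z ↦ ω z
  obtain ⟨c, hc, hsz'⟩ := hs z
  refine ⟨⟨omega3, omega3_mem⟩, rfl, ?_⟩
  have hco : (c : ℂ) = 1 - omega3 := by rw [hc, hz]; field_simp
  have h1c : ((1 - c : Eis) : ℂ) = omega3 := by push_cast; rw [hco]; ring
  have : (1 - c : Eis) = ⟨omega3, omega3_mem⟩ := Subtype.ext h1c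
  rw [hsz', ← this, sub_smul, one_smul]
end

section
/- Let X_0 be a Type III K3 surface in minus-one-form with components V_i of degrees d_i (the number of double curves on V_i). Then each d_i \le 6; equivalently, the dual-graph triangulation is of non-negative combinatorial curvature. -/
/-- Hodge-index bound for anticanonical cycles: in a real vector space with a
symmetric bilinear form in which every positive definite subspace has rank at
most 1 (signature `(1, r-1)`), a cyclic configuration `D_1, …, D_d` (`d ≥ 3`)
with `D_i² = -1`, `D_i·D_{i±1} = 1` and `D_i·D_j = 0` otherwise must have
`d ≤ 6`.  This is the lattice-theoretic content of the fact that the components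
of a Type III K3 surface in minus-one-form are del Pezzo surfaces of degree at
most 6, i.e. the dual-graph triangulation has non-negative combinatorial
curvature. -/
theorem stmt13 {V : Type*} [AddCommGroup V] [Module ℝ V]
    (B : V →ₗ[ℝ] V →ₗ[ℝ] ℝ) (hsymm : ∀ x y, B x y = B y x)
    (hsig : ∀ W : Submodule ℝ V, (∀ w ∈ W, w ≠ 0 → 0 < B w w) →
      Module.rank ℝ ↥W ≤ 1)
    (d : ℕ) (hd : 3 ≤ d) (D : Fin d → V)
    (hdiag : ∀ i, B (D i) (D i) = -1)
    (hadj : ∀ i j : Fin d, i ≠ j →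
      (((i : ℕ) + 1) % d = j ∨ ((j : ℕ) + 1) % d = i) → B (D i) (D j) = 1)
    (hnonadj : ∀ i j : Fin d, i ≠ j →
      ¬(((i : ℕ) + 1) % d = j ∨ ((j : ℕ) + 1) % d = i) → B (D i) (D j) = 0) :
    d ≤ 6 := by
  by_contra hle
  push_neg at hle
  have hd7 : 7 ≤ d := hle
  set idx : Fin 6 → Fin d := fun k => ⟨(k : ℕ) + 1, by omega⟩ with hidx
  -- mod arithmetic helper
  have hmod : ∀ a : ℕ, a ≤ 7 → ∀ b : ℕ, 1 ≤ b → b ≤ 6 → (a % d = b ↔ a = b) := by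
    intro a ha b hb1 hb6
    rcases lt_or_ge a d with h | h
    · rw [Nat.mod_eq_of_lt h]
    · have had : a = d := by omega
      subst had
      rw [Nat.mod_self]
      omega
  -- Gram entries for the window 1..6
  have hg : ∀ k l : Fin 6, B (D (idx k)) (D (idx l)) =
      if k = l then -1 else
        if (k : ℕ) + 1 = (l : ℕ) ∨ (l : ℕ) + 1 = (k : ℕ) then 1 else 0 := by
    intro k l
    by_cases hkl : k = l
    · simp [hkl, hdiag]
    · have hklv : (k : ℕ) ≠ (l : ℕ) := fun h => hkl (Fin.ext h)
      have hne : idx k ≠ idx l := by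
        simp only [hidx, Ne, Fin.mk.injEq]
        omega
      have hk5 : (k : ℕ) ≤ 5 := by omega
      have hl5 : (l : ℕ) ≤ 5 := by omega
      have hcond : ((((idx k : Fin d) : ℕ) + 1) % d = ((idx l : Fin d) : ℕ) ∨
          (((idx l : Fin d) : ℕ) + 1) % d = ((idx k : Fin d) : ℕ)) ↔
          ((k : ℕ) + 1 = (l : ℕ) ∨ (l : ℕ) + 1 = (k : ℕ)) := by
      -- the indices in the window are small so mod d is trivial
        simp only [hidx]
        rw [hmod ((k : ℕ) + 1 + 1) (by omega) ((l : ℕ) + 1) (by omega) (by omega),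
          hmod ((l : ℕ) + 1 + 1) (by omega) ((k : ℕ) + 1) (by omega) (by omega)]
        omega
      by_cases hc : ((k : ℕ) + 1 = (l : ℕ) ∨ (l : ℕ) + 1 = (k : ℕ))
      · rw [if_neg hkl, if_pos hc]
        exact hadj _ _ hne (hcond.mpr hc)
      · rw [if_neg hkl, if_neg hc]
        exact hnonadj _ _ hne (fun h => hc (hcond.mp h))
  -- the two positive vectors
  set c1 : Fin 6 → ℝ := ![1, 2, 3, 3, 2, 1] with hc1
  set c2 : Fin 6 → ℝ := ![4, 5, 2, -2, -5, -4] with hc2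
  set t1 : V := ∑ k, c1 k • D (idx k) with ht1
  set t2 : V := ∑ k, c2 k • D (idx k) with ht2
  have e11 : B t1 t1 = 22 := by
    rw [ht1]
    simp only [map_sum, map_smul, LinearMap.sum_apply, LinearMap.smul_apply, smul_eq_mul, hg]
    simp [Fin.sum_univ_succ, hc1]
    norm_num [Fin.ext_iff, Fin.val_succ]
  have e22 : B t2 t2 = 22 := by
    rw [ht2]
    simp only [map_sum, map_smul, LinearMap.sum_apply, LinearMap.smul_apply, smul_eq_mul, hg]
    simp [Fin.sum_univ_succ, hc2]
    norm_num [Fin.ext_iff, Fin.val_succ]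
  have e12 : B t1 t2 = 0 := by
    rw [ht1, ht2]
    simp only [map_sum, map_smul, LinearMap.sum_apply, LinearMap.smul_apply, smul_eq_mul, hg]
    simp [Fin.sum_univ_succ, hc1, hc2]
    norm_num [Fin.ext_iff, Fin.val_succ]
  have e21 : B t2 t1 = 0 := by rw [hsymm, e12]
  have key : ∀ a b : ℝ, B (a • t1 + b • t2) (a • t1 + b • t2) = 22 * (a ^ 2 + b ^ 2) := by
    intro a b
    simp only [map_add, map_smul, LinearMap.add_apply, LinearMap.smul_apply,
      smul_eq_mul, e11, e12, e21, e22]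
    ring
  -- linear independence
  have li : LinearIndependent ℝ ![t1, t2] := by
    rw [LinearIndependent.pair_iff]
    intro a b hab
    have h0 : B (a • t1 + b • t2) (a • t1 + b • t2) = 0 := by rw [hab]; simp
    rw [key] at h0
    constructor <;> nlinarith [sq_nonneg a, sq_nonneg b]
  -- the positive definite plane
  set W : Submodule ℝ V := Submodule.span ℝ (Set.range ![t1, t2]) with hW
  have hrange : Set.range ![t1, t2] = {t1, t2} := by
    ext x
    simp [Fin.exists_fin_two]
    tauto
  have hpos : ∀ w ∈ W, w ≠ 0 → 0 < B w w := by
    intro w hw hw0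
    rw [hW, hrange, Submodule.mem_span_pair] at hw
    obtain ⟨a, b, hab⟩ := hw
    have hne : a ≠ 0 ∨ b ≠ 0 := by
      by_contra hcon
      push_neg at hcon
      apply hw0
      rw [← hab, hcon.1, hcon.2, zero_smul, zero_smul, add_zero]
    rw [← hab, key]
    have hsq : 0 < a ^ 2 + b ^ 2 := by
      rcases hne with h | h
      · nlinarith [pow_two_pos_of_ne_zero h, sq_nonneg b]
      · nlinarith [pow_two_pos_of_ne_zero h, sq_nonneg a]
    nlinarith
  have hrank := hsig W hpos
  have hne12 : t1 ≠ t2 := fun h => by rw [h, e22] at e12; norm_num at e12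
  have hr2 : Module.rank ℝ ↥W = 2 := by
    rw [hW, rank_span li, hrange, Cardinal.mk_insert (by simp [hne12]),
      Cardinal.mk_singleton]
    norm_num [Fin.ext_iff, Fin.val_succ]
  rw [hr2] at hrank
  norm_num at hrank
end
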